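/- Let the DPC-G iterates be defined as follows: given y_0 ∈ E and a sequence of symmetric positive semidefinite linear maps H_k on E satisfying ‖id − (∇²_y F(t_k, y_k)) ∘ H_k‖ ≤ ε for all k (operator norm), set y_{k+1|k} := y_k − h · H_k (∂_t ∇_y F(t_k, y_k)) (prediction) and y_{k+1} := y_{k+1|k} − γ ∇_y F(t_{k+1}, y_{k+1|k}) (gradient correction). Define ρ := max(|1 − γm|, |1 − γL'|). If 0 < γ < 2/L' and in addition h < (C0C1/m² + C2/m)^{-1}(ρ^{-1} − 1) (equivalently ρσ < 1), then for every k ≥ 0: ‖y_k − y*(t_k)‖ ≤ (ρσ)^k ‖y_0 − y*(t_0)‖ + ρ · (hC0ε/m + h²Δ) · (1 − (ρσ)^k)/(1 − ρσ). In particular limsup_{k→∞} ‖y_k − y*(t_k)‖ ≤ ρ/(1 − ρσ) · (hC0ε/m + h²Δ). -/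

import Mathlib

open scoped InnerProductSpace

local notation "E" n => EuclideanSpace ℝ (Fin n)

/-
Write `e_k = ‖y_k − y*(t_k)‖`. The correction is a gradient step on `F(t_{k+1}, ·)`, whose
Jacobian `id − γ∇²F` is symmetric with Rayleigh quotients in `[1 − γL', 1 − γm]`; by the mean
value inequality it contracts the distance to `y*(t_{k+1})` by `ρ`.

The prediction is compared with the exact step `y*(t) − h ψ`, where
`∇²F(t, y*(t)) ψ = ∂ₜ∇F(t, y*(t))`.
Second-order Taylor bounds in time (constant `C3`) and in space (constant `C1`), together with the
`C2`-Lipschitz bound on `∂ₜ∇F`, show that the gradient of `F(t + h, ·)` at that point is at most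
`m h² Δ`, so by strong monotonicity the point is within `h² Δ` of `y*(t + h)`. Replacing `y*(t)` by
`y_k` costs the Lipschitz constant `C0C1/m² + C2/m` of `x ↦ ∇²F⁻¹ ∂ₜ∇F`, and replacing the inverse
Hessian by `H_k` costs `hC0ε/m`. Hence `e_{k+1} ≤ ρσ e_k + ρ(hC0ε/m + h²Δ)`, which unrolls to the
geometric bound and its limsup.
-/

open Set Filter Topology

lemma le_pow_mul_add_of_le_mul_add {a : ℕ → ℝ} {r b : ℝ} (hr0 : 0 ≤ r) (hr1 : r ≠ 1)
    (ha : ∀ k, a (k + 1) ≤ r * a k + b) (k : ℕ) :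
    a k ≤ r ^ k * a 0 + b * (1 - r ^ k) / (1 - r) := by
  induction k with
  | zero => simp
  | succ k ih =>
    have h1r : 1 - r ≠ 0 := sub_ne_zero.2 hr1.symm
    calc a (k + 1) ≤ r * a k + b := ha k
      _ ≤ r * (r ^ k * a 0 + b * (1 - r ^ k) / (1 - r)) + b := by gcongr
      _ = r ^ (k + 1) * a 0 + b * (1 - r ^ (k + 1)) / (1 - r) := by field_simp; ring

lemma limsup_le_of_le_pow_mul_add {a : ℕ → ℝ} {r b c : ℝ} (hr0 : 0 ≤ r) (hr1 : r < 1)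
    (ha0 : ∀ k, 0 ≤ a k) (ha : ∀ k, a k ≤ r ^ k * c + b * (1 - r ^ k) / (1 - r)) :
    limsup a atTop ≤ b / (1 - r) := by
  have hpow := tendsto_pow_atTop_nhds_zero_of_lt_one hr0 hr1
  have hlim : Tendsto (fun k ↦ r ^ k * c + b * (1 - r ^ k) / (1 - r)) atTop (𝓝 (b / (1 - r))) := by
    simpa using (hpow.mul_const c).add
      ((((tendsto_const_nhds (x := (1 : ℝ))).sub hpow).const_mul b).div_const (1 - r))
  calc limsup a atTop ≤ limsup (fun k ↦ r ^ k * c + b * (1 - r ^ k) / (1 - r)) atTop :=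
        limsup_le_limsup (.of_forall ha) (isCoboundedUnder_le_of_le atTop ha0)
          hlim.isBoundedUnder_le
    _ = b / (1 - r) := hlim.limsup_eq

section CoerciveOperator

variable {V : Type*} [NormedAddCommGroup V] [InnerProductSpace ℝ V]

lemma mul_norm_le_of_mul_norm_sq_le_inner {u v : V} {m : ℝ} (h : m * ‖v‖ ^ 2 ≤ ⟪u, v⟫_ℝ) :
    m * ‖v‖ ≤ ‖u‖ := by
  rcases (norm_nonneg v).eq_or_lt with hv | hv
  · rw [← hv, mul_zero]; exact norm_nonneg _
  · refine le_of_mul_le_mul_right ?_ hv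
    calc m * ‖v‖ * ‖v‖ = m * ‖v‖ ^ 2 := by ring
      _ ≤ ⟪u, v⟫_ℝ := h
      _ ≤ ‖u‖ * ‖v‖ := real_inner_le_norm _ _

lemma surjective_of_coercive [FiniteDimensional ℝ V] {A : V →L[ℝ] V} {m : ℝ} (hm : 0 < m)
    (hA : ∀ v, m * ‖v‖ ^ 2 ≤ ⟪A v, v⟫_ℝ) : Function.Surjective A := by
  have hinj : Function.Injective (A : V →ₗ[ℝ] V) := by
    refine (injective_iff_map_eq_zero _).2 fun v hv ↦ ?_
    have := mul_norm_le_of_mul_norm_sq_le_inner (hA v)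
    rw [show A v = 0 from hv, norm_zero] at this
    exact norm_le_zero_iff.1 (nonpos_of_mul_nonpos_right this hm)
  exact LinearMap.injective_iff_surjective.1 hinj

lemma mul_norm_sub_le_of_apply_eq {A B : V →L[ℝ] V} {u w a b : V} {m : ℝ}
    (hA : ∀ v, m * ‖v‖ ^ 2 ≤ ⟪A v, v⟫_ℝ) (hu : A u = a) (hw : B w = b) :
    m * ‖u - w‖ ≤ ‖a - b‖ + ‖A - B‖ * ‖w‖ := by
  have hsplit : A (u - w) = (a - b) - (A - B) w := by
    simp only [map_sub, hu, ← hw, sub_apply]; abel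
  calc m * ‖u - w‖ ≤ ‖A (u - w)‖ := mul_norm_le_of_mul_norm_sq_le_inner (hA _)
    _ ≤ ‖a - b‖ + ‖(A - B) w‖ := hsplit ▸ norm_sub_le _ _
    _ ≤ ‖a - b‖ + ‖A - B‖ * ‖w‖ := by grw [ContinuousLinearMap.le_opNorm]

lemma norm_le_div_of_apply_eq {A : V →L[ℝ] V} {u a : V} {m : ℝ} (hm : 0 < m)
    (hA : ∀ v, m * ‖v‖ ^ 2 ≤ ⟪A v, v⟫_ℝ) (hu : A u = a) : ‖u‖ ≤ ‖a‖ / m := by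
  rw [le_div_iff₀' hm, ← hu]
  exact mul_norm_le_of_mul_norm_sq_le_inner (hA u)

lemma norm_id_sub_smul_le {A : V →L[ℝ] V} {m L' : ℝ} (hsym : (A : V →ₗ[ℝ] V).IsSymmetric)
    (hlow : ∀ v, m * ‖v‖ ^ 2 ≤ ⟪A v, v⟫_ℝ) (hupp : ∀ v, ⟪A v, v⟫_ℝ ≤ L' * ‖v‖ ^ 2) (γ : ℝ) :
    ‖ContinuousLinearMap.id ℝ V - γ • A‖ ≤ max |1 - γ * m| |1 - γ * L'| := by
  set T := ContinuousLinearMap.id ℝ V - γ • A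
  have hT : (T : V →ₗ[ℝ] V).IsSymmetric :=
    LinearMap.IsSymmetric.id.sub (hsym.smul (conj_trivial γ))
  rw [T.norm_eq_iSup_rayleighQuotient hT]
  refine ciSup_le fun v ↦ ?_
  rcases (norm_nonneg v).eq_or_lt with hv | hv
  · obtain rfl : v = 0 := norm_eq_zero.1 hv.symm
    simp
  · have hv2 : 0 < ‖v‖ ^ 2 := by positivity
    have hq : T.rayleighQuotient v = 1 - γ * (⟪A v, v⟫_ℝ / ‖v‖ ^ 2) := by
      simp only [ContinuousLinearMap.rayleighQuotient, ContinuousLinearMap.reApplyInnerSelf_apply,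
        T, sub_apply, smul_apply, ContinuousLinearMap.id_apply, inner_sub_left,
        real_inner_smul_left, real_inner_self_eq_norm_sq, RCLike.re_to_real]
      field_simp
    have hlo : m ≤ ⟪A v, v⟫_ℝ / ‖v‖ ^ 2 := (le_div_iff₀ hv2).2 (hlow v)
    have hhi : ⟪A v, v⟫_ℝ / ‖v‖ ^ 2 ≤ L' := (div_le_iff₀ hv2).2 (hupp v)
    rw [hq]
    rcases le_total 0 γ with hγ | hγ
    · exact (abs_le_max_abs_abs (by nlinarith) (by nlinarith)).trans_eq (max_comm _ _)
    · exact abs_le_max_abs_abs (by nlinarith) (by nlinarith)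

end CoerciveOperator

section Calculus

variable {V W : Type*} [NormedAddCommGroup V] [NormedSpace ℝ V]
  [NormedAddCommGroup W] [NormedSpace ℝ W]

lemma norm_sub_sub_smul_le_of_norm_deriv_sub_le {f f' : ℝ → W} {C b : ℝ}
    (hf : ∀ τ, HasDerivAt f (f' τ) τ) (hf' : ∀ τ ∈ Icc 0 b, ‖f' τ - f' 0‖ ≤ C * τ)
    (hb : 0 ≤ b) : ‖f b - f 0 - b • f' 0‖ ≤ C * b ^ 2 / 2 := by
  have hg (τ : ℝ) : HasDerivAt (fun τ ↦ f τ - f 0 - τ • f' 0) (f' τ - f' 0) τ := by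
    have := ((hf τ).sub_const (f 0)).sub ((hasDerivAt_id' τ).smul_const (f' 0))
    rwa [one_smul] at this
  have hB (τ : ℝ) : HasDerivAt (fun τ : ℝ ↦ C * τ ^ 2 / 2) (C * τ) τ :=
    (((hasDerivAt_pow 2 τ).const_mul C).div_const 2).congr_deriv (by push_cast; ring)
  exact image_norm_le_of_norm_deriv_right_le_deriv_boundary
    (fun τ _ ↦ (hg τ).continuousAt.continuousWithinAt) (fun τ _ ↦ (hg τ).hasDerivWithinAt)
    (by simp) hB (fun τ hτ ↦ hf' τ (Ico_subset_Icc_self hτ)) ⟨hb, le_rfl⟩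

lemma norm_add_sub_sub_le_of_lipschitz_fderiv {f : V → W} {f' : V → V →L[ℝ] W} {C : ℝ}
    (hf : ∀ x, HasFDerivAt f (f' x) x) (hf' : ∀ x y, ‖f' x - f' y‖ ≤ C * ‖x - y‖) (x d : V) :
    ‖f (x + d) - f x - f' x d‖ ≤ C * ‖d‖ ^ 2 / 2 := by
  have hline (τ : ℝ) : HasDerivAt (fun τ : ℝ ↦ f (x + τ • d)) (f' (x + τ • d) d) τ := by
    simpa [Function.comp_def] using
      (hf _).comp_hasDerivAt τ (((hasDerivAt_id' τ).smul_const d).const_add x)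
  have key := norm_sub_sub_smul_le_of_norm_deriv_sub_le hline (C := C * ‖d‖ ^ 2) ?_ zero_le_one
  · simpa using key
  intro τ hτ
  calc ‖f' (x + τ • d) d - f' (x + (0 : ℝ) • d) d‖ = ‖(f' (x + τ • d) - f' x) d‖ := by simp
    _ ≤ ‖f' (x + τ • d) - f' x‖ * ‖d‖ := ContinuousLinearMap.le_opNorm _ _
    _ ≤ C * ‖τ • d‖ * ‖d‖ := by gcongr; simpa using hf' (x + τ • d) x
    _ = C * ‖d‖ ^ 2 * τ := by rw [norm_smul, Real.norm_of_nonneg hτ.1]; ring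

lemma norm_add_sub_sub_smul_le_of_norm_deriv2_le {f f' f'' : ℝ → W} {C : ℝ}
    (hf : ∀ s, HasDerivAt f (f' s) s) (hf' : ∀ s, HasDerivAt f' (f'' s) s)
    (hC : ∀ s, ‖f'' s‖ ≤ C) (a : ℝ) {b : ℝ} (hb : 0 ≤ b) :
    ‖f (a + b) - f a - b • f' a‖ ≤ C * b ^ 2 / 2 := by
  have hlip (τ : ℝ) : ‖f' (a + τ) - f' a‖ ≤ C * ‖a + τ - a‖ :=
    convex_univ.norm_image_sub_le_of_norm_hasDerivWithin_le
      (fun s _ ↦ (hf' s).hasDerivWithinAt) (fun s _ ↦ hC s) (mem_univ _) (mem_univ _)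
  have key := norm_sub_sub_smul_le_of_norm_deriv_sub_le (f := fun τ ↦ f (a + τ)) (C := C)
    (fun τ ↦ (hf (a + τ)).comp_const_add a τ) (fun τ hτ ↦ ?_) hb
  · simpa using key
  · simpa [abs_of_nonneg hτ.1] using hlip τ

end Calculus

section GradientCalculus

variable {V : Type*} [NormedAddCommGroup V] [InnerProductSpace ℝ V]

lemma mul_norm_sub_le_norm_sub_of_coercive_fderiv {f : V → V} {A : V → V →L[ℝ] V} {m : ℝ}
    (hf : ∀ x, HasFDerivAt f (A x) x) (hA : ∀ x v, m * ‖v‖ ^ 2 ≤ ⟪A x v, v⟫_ℝ) (z w : V) :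
    m * ‖z - w‖ ≤ ‖f z - f w‖ := by
  set d := z - w
  have hφ (τ : ℝ) :
      HasDerivAt (fun τ : ℝ ↦ ⟪f (w + τ • d), d⟫_ℝ) ⟪A (w + τ • d) d, d⟫_ℝ τ := by
    have hline := ((hasDerivAt_id' τ).smul_const d).const_add w
    simpa using ((hf _).comp_hasDerivAt τ hline).inner ℝ (hasDerivAt_const τ d)
  have hincr := mul_sub_le_image_sub_of_le_deriv (fun τ ↦ (hφ τ).differentiableAt)
    (fun τ ↦ (hφ τ).deriv ▸ hA _ d) zero_le_one
  refine mul_norm_le_of_mul_norm_sq_le_inner ?_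
  simpa [d, inner_sub_left] using hincr

lemma norm_sub_smul_sub_le_of_fderiv {f : V → V} {A : V → V →L[ℝ] V} {m L' γ : ℝ} {x : V}
    (hf : ∀ y, HasFDerivAt f (A y) y) (hsym : ∀ y, (A y : V →ₗ[ℝ] V).IsSymmetric)
    (hlow : ∀ y v, m * ‖v‖ ^ 2 ≤ ⟪A y v, v⟫_ℝ) (hupp : ∀ y v, ⟪A y v, v⟫_ℝ ≤ L' * ‖v‖ ^ 2)
    (hx : f x = 0) (z : V) :
    ‖z - γ • f z - x‖ ≤ max |1 - γ * m| |1 - γ * L'| * ‖z - x‖ := by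
  have hg (y : V) : HasFDerivWithinAt (fun y ↦ y - γ • f y)
      (ContinuousLinearMap.id ℝ V - γ • A y) univ y :=
    ((hasFDerivAt_id y).sub ((hf y).const_smul γ)).hasFDerivWithinAt
  have := convex_univ.norm_image_sub_le_of_norm_hasFDerivWithin_le (fun y _ ↦ hg y)
    (fun y _ ↦ norm_id_sub_smul_le (hsym y) (hlow y) (hupp y) γ) (mem_univ x) (mem_univ z)
  simpa [hx] using this

variable [CompleteSpace V]

lemma IsLocalMin.hasGradientAt_eq_zero {f : V → ℝ} {x g : V} (hmin : IsLocalMin f x)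
    (hf : HasGradientAt f g x) : g = 0 := by
  simpa using hmin.hasFDerivAt_eq_zero hf.hasFDerivAt

lemma isSymmetric_of_hasGradientAt_of_hasFDerivAt {f : V → ℝ} {g : V → V} {A : V →L[ℝ] V}
    {x : V} (hf : ∀ y, HasGradientAt f (g y) y) (hg : HasFDerivAt g A x) :
    (A : V →ₗ[ℝ] V).IsSymmetric := by
  set J := (InnerProductSpace.toDual ℝ V).toContinuousLinearEquiv.toContinuousLinearMap
  have h := second_derivative_symmetric (fun y ↦ (hf y).hasFDerivAt) (J.hasFDerivAt.comp x hg)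
  intro v w
  simpa [J, real_inner_comm] using h v w

end GradientCalculus

section Tracking

variable {V : Type*} [NormedAddCommGroup V] [InnerProductSpace ℝ V]
  {Fgrad Gt Gtt : ℝ → V → V} {Hess : ℝ → V → V →L[ℝ] V} {ystar : ℝ → V} {m C0 C1 C2 C3 : ℝ}

lemma norm_prediction_sub_le
    (hhess : ∀ t y, HasFDerivAt (Fgrad t) (Hess t y) y)
    (ht : ∀ t y, HasDerivAt (fun s => Fgrad s y) (Gt t y) t)
    (htt : ∀ t y, HasDerivAt (fun s => Gt s y) (Gtt t y) t)
    (hstrong : ∀ t y (v : V), m * ‖v‖ ^ 2 ≤ ⟪Hess t y v, v⟫_ℝ)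
    (hC0b : ∀ t y, ‖Gt t y‖ ≤ C0)
    (hC1b : ∀ t y y', ‖Hess t y - Hess t y'‖ ≤ C1 * ‖y - y'‖)
    (hC2b : ∀ t y y', ‖Gt t y - Gt t y'‖ ≤ C2 * ‖y - y'‖)
    (hC3b : ∀ t y, ‖Gtt t y‖ ≤ C3)
    (hm : 0 < m) (hC1 : 0 ≤ C1) (hC2 : 0 ≤ C2) (hzero : ∀ t, Fgrad t (ystar t) = 0)
    {t h : ℝ} (hh : 0 ≤ h) {ψ : V} (hψ : Hess t (ystar t) ψ = Gt t (ystar t)) :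
    ‖ystar t - h • ψ - ystar (t + h)‖
      ≤ h ^ 2 * (C0 ^ 2 * C1 / (2 * m ^ 3) + C0 * C2 / m ^ 2 + C3 / (2 * m)) := by
  set x := ystar t
  set δ := -(h • ψ)
  have hδ : ‖δ‖ ≤ h * (C0 / m) := by
    rw [norm_neg, norm_smul, Real.norm_of_nonneg hh]
    gcongr
    exact (norm_le_div_of_apply_eq hm (hstrong t x) hψ).trans (by gcongr; exact hC0b t x)
  -- `Hess t x δ = -h • Gt t x` and `Fgrad t x = 0` cancel the zeroth and first order terms.
  have hsplit : Fgrad (t + h) (x + δ)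
      = (Fgrad (t + h) (x + δ) - Fgrad t (x + δ) - h • Gt t (x + δ))
        + h • (Gt t (x + δ) - Gt t x)
        + (Fgrad t (x + δ) - Fgrad t x - Hess t x δ) := by
    simp only [δ, map_neg, map_smul, hψ, hzero t, x, smul_sub]; abel
  have htime := norm_add_sub_sub_smul_le_of_norm_deriv2_le (fun s ↦ ht s (x + δ))
    (fun s ↦ htt s (x + δ)) (fun s ↦ hC3b s (x + δ)) t hh
  have hspace := norm_add_sub_sub_le_of_lipschitz_fderiv (hhess t) (hC1b t) x δ
  have hmid : ‖h • (Gt t (x + δ) - Gt t x)‖ ≤ h * (C2 * ‖δ‖) := by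
    rw [norm_smul, Real.norm_of_nonneg hh]
    simpa using mul_le_mul_of_nonneg_left (hC2b t (x + δ) x) hh
  have hgrad : ‖Fgrad (t + h) (x + δ)‖ ≤ m * (h ^ 2 *
      (C0 ^ 2 * C1 / (2 * m ^ 3) + C0 * C2 / m ^ 2 + C3 / (2 * m))) := by
    calc ‖Fgrad (t + h) (x + δ)‖ ≤ C3 * h ^ 2 / 2 + h * (C2 * ‖δ‖) + C1 * ‖δ‖ ^ 2 / 2 := by
          rw [hsplit]; exact norm_add₃_le.trans (by gcongr)
      _ ≤ C3 * h ^ 2 / 2 + h * (C2 * (h * (C0 / m))) + C1 * (h * (C0 / m)) ^ 2 / 2 := by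
          gcongr
      _ = _ := by field_simp; ring
  have hlower := mul_norm_sub_le_norm_sub_of_coercive_fderiv (hhess (t + h)) (hstrong (t + h))
    (x + δ) (ystar (t + h))
  rw [hzero, sub_zero] at hlower
  have hx : x - h • ψ = x + δ := by rw [sub_eq_add_neg]
  rw [hx]
  exact le_of_mul_le_mul_left (hlower.trans hgrad) hm

lemma norm_inexact_prediction_sub_le [FiniteDimensional ℝ V]
    (hhess : ∀ t y, HasFDerivAt (Fgrad t) (Hess t y) y)
    (ht : ∀ t y, HasDerivAt (fun s => Fgrad s y) (Gt t y) t)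
    (htt : ∀ t y, HasDerivAt (fun s => Gt s y) (Gtt t y) t)
    (hstrong : ∀ t y (v : V), m * ‖v‖ ^ 2 ≤ ⟪Hess t y v, v⟫_ℝ)
    (hC0b : ∀ t y, ‖Gt t y‖ ≤ C0)
    (hC1b : ∀ t y y', ‖Hess t y - Hess t y'‖ ≤ C1 * ‖y - y'‖)
    (hC2b : ∀ t y y', ‖Gt t y - Gt t y'‖ ≤ C2 * ‖y - y'‖)
    (hC3b : ∀ t y, ‖Gtt t y‖ ≤ C3)
    (hm : 0 < m) (hC1 : 0 ≤ C1) (hC2 : 0 ≤ C2)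
    (hzero : ∀ t, Fgrad t (ystar t) = 0) {t h ε : ℝ} (hh : 0 ≤ h) {x : V} {H : V →L[ℝ] V}
    (hH : ‖ContinuousLinearMap.id ℝ V - (Hess t x).comp H‖ ≤ ε) :
    ‖x - h • H (Gt t x) - ystar (t + h)‖
      ≤ (1 + h * (C0 * C1 / m ^ 2 + C2 / m)) * ‖x - ystar t‖
        + (h * C0 * ε / m
          + h ^ 2 * (C0 ^ 2 * C1 / (2 * m ^ 3) + C0 * C2 / m ^ 2 + C3 / (2 * m))) := by
  set g := Gt t x
  set e := ‖x - ystar t‖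
  obtain ⟨u, hu⟩ := surjective_of_coercive hm (hstrong t x) g
  obtain ⟨ψ, hψ⟩ := surjective_of_coercive hm (hstrong t (ystar t)) (Gt t (ystar t))
  have hψn : ‖ψ‖ ≤ C0 / m := (norm_le_div_of_apply_eq hm (hstrong _ _) hψ).trans
    (by gcongr; exact hC0b _ _)
  have hinexact : ‖u - H g‖ ≤ C0 * ε / m := by
    have hε : 0 ≤ ε := (norm_nonneg _).trans hH
    have key := mul_norm_sub_le_of_apply_eq (hstrong t x) hu (rfl : Hess t x (H g) = _)
    rw [sub_self, norm_zero, zero_mul, add_zero] at key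
    rw [le_div_iff₀' hm]
    calc m * ‖u - H g‖ ≤ ‖(ContinuousLinearMap.id ℝ V - (Hess t x).comp H) g‖ := key
      _ ≤ ε * ‖g‖ := (ContinuousLinearMap.le_opNorm _ _).trans (by gcongr)
      _ ≤ C0 * ε := by rw [mul_comm]; gcongr; exact hC0b _ _
  have hlip : ‖u - ψ‖ ≤ (C0 * C1 / m ^ 2 + C2 / m) * e := by
    have key := mul_norm_sub_le_of_apply_eq (hstrong t x) hu hψ
    refine le_of_mul_le_mul_left (key.trans ?_) hm
    calc ‖g - Gt t (ystar t)‖ + ‖Hess t x - Hess t (ystar t)‖ * ‖ψ‖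
        ≤ C2 * e + C1 * e * (C0 / m) := by gcongr; exacts [hC2b _ _ _, hC1b _ _ _]
      _ = m * ((C0 * C1 / m ^ 2 + C2 / m) * e) := by field_simp; ring
  have hsplit : x - h • H g - ystar (t + h)
      = (x - ystar t) + h • (u - H g) - h • (u - ψ) + (ystar t - h • ψ - ystar (t + h)) := by
    simp only [smul_sub]; abel
  have hpred := norm_prediction_sub_le hhess ht htt hstrong hC0b hC1b hC2b hC3b hm hC1 hC2 hzero
    hh hψ
  rw [hsplit]
  calc _ ≤ e + ‖h • (u - H g)‖ + ‖h • (u - ψ)‖ + ‖ystar t - h • ψ - ystar (t + h)‖ :=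
        norm_add_le_of_le (norm_sub_le_of_le (norm_add_le _ _) le_rfl) le_rfl
    _ ≤ e + h * (C0 * ε / m) + h * ((C0 * C1 / m ^ 2 + C2 / m) * e)
        + h ^ 2 * (C0 ^ 2 * C1 / (2 * m ^ 3) + C0 * C2 / m ^ 2 + C3 / (2 * m)) := by
      simp only [norm_smul, Real.norm_of_nonneg hh]
      gcongr
    _ = _ := by ring

end Tracking

theorem stmt_1_general {n : ℕ}
    (F : ℝ → (E n) → ℝ)
    (Fgrad : ℝ → (E n) → (E n))
    (Hess : ℝ → (E n) → (E n) →L[ℝ] (E n))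
    (Gt Gtt : ℝ → (E n) → (E n))
    (m L' C0 C1 C2 C3 : ℝ)
    (hm : 0 < m)
    (hC0 : 0 ≤ C0) (hC1 : 0 ≤ C1) (hC2 : 0 ≤ C2)
    (hgrad : ∀ t y, HasGradientAt (F t) (Fgrad t y) y)
    (hhess : ∀ t y, HasFDerivAt (Fgrad t) (Hess t y) y)
    (ht : ∀ t y, HasDerivAt (fun s => Fgrad s y) (Gt t y) t)
    (htt : ∀ t y, HasDerivAt (fun s => Gt s y) (Gtt t y) t)
    (hstrong : ∀ t y (v : E n), m * ‖v‖ ^ 2 ≤ ⟪Hess t y v, v⟫_ℝ)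
    (hsmooth : ∀ t y (v : E n), ⟪Hess t y v, v⟫_ℝ ≤ L' * ‖v‖ ^ 2)
    (hC0b : ∀ t y, ‖Gt t y‖ ≤ C0)
    (hC1b : ∀ t y y', ‖Hess t y - Hess t y'‖ ≤ C1 * ‖y - y'‖)
    (hC2b : ∀ t y y', ‖Gt t y - Gt t y'‖ ≤ C2 * ‖y - y'‖)
    (hC3b : ∀ t y, ‖Gtt t y‖ ≤ C3)
    (ystar : ℝ → E n)
    (hmin : ∀ t, IsMinOn (F t) Set.univ (ystar t))
    (h γ ε Δ σ ρ : ℝ) (hh : 0 < h)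
    (hΔ : Δ = C0 ^ 2 * C1 / (2 * m ^ 3) + C0 * C2 / m ^ 2 + C3 / (2 * m))
    (hσ : σ = 1 + h * (C0 * C1 / m ^ 2 + C2 / m))
    (hρ : ρ = max |1 - γ * m| |1 - γ * L'|)
    (hρσ : ρ * σ < 1)
    (tk : ℕ → ℝ) (htk : ∀ k : ℕ, tk k = k * h)
    (y ypred : ℕ → E n)
    (H : ℕ → (E n) →L[ℝ] (E n))
    (hHerr : ∀ k, ‖ContinuousLinearMap.id ℝ (E n) - (Hess (tk k) (y k)).comp (H k)‖ ≤ ε)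
    (hpred : ∀ k, ypred k = y k - h • H k (Gt (tk k) (y k)))
    (hcorr : ∀ k, y (k + 1) = ypred k - γ • Fgrad (tk (k + 1)) (ypred k)) :
    (∀ k : ℕ, ‖y k - ystar (tk k)‖
        ≤ (ρ * σ) ^ k * ‖y 0 - ystar (tk 0)‖
          + ρ * (h * C0 * ε / m + h ^ 2 * Δ) * (1 - (ρ * σ) ^ k) / (1 - ρ * σ))
    ∧ Filter.limsup (fun k => ‖y k - ystar (tk k)‖) Filter.atTop
        ≤ ρ / (1 - ρ * σ) * (h * C0 * ε / m + h ^ 2 * Δ) := by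
  have hzero (t : ℝ) : Fgrad t (ystar t) = 0 :=
    ((hmin t).isLocalMin univ_mem).hasGradientAt_eq_zero (hgrad t _)
  have hsym (t : ℝ) (x : E n) : (Hess t x : (E n) →ₗ[ℝ] (E n)).IsSymmetric :=
    isSymmetric_of_hasGradientAt_of_hasFDerivAt (hgrad t) (hhess t x)
  have hρ0 : 0 ≤ ρ := hρ ▸ le_max_of_le_left (abs_nonneg _)
  have hρσ0 : 0 ≤ ρ * σ := mul_nonneg hρ0 (by rw [hσ]; positivity)
  have hstep (k : ℕ) : ‖y (k + 1) - ystar (tk (k + 1))‖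
      ≤ ρ * σ * ‖y k - ystar (tk k)‖ + ρ * (h * C0 * ε / m + h ^ 2 * Δ) := by
    have htk1 : tk (k + 1) = tk k + h := by rw [htk, htk]; push_cast; ring
    calc ‖y (k + 1) - ystar (tk (k + 1))‖ ≤ ρ * ‖ypred k - ystar (tk (k + 1))‖ := by
          rw [hcorr, hρ]
          exact norm_sub_smul_sub_le_of_fderiv (hhess _) (hsym _) (hstrong _) (hsmooth _)
            (hzero _) _
      _ ≤ ρ * (σ * ‖y k - ystar (tk k)‖ + (h * C0 * ε / m + h ^ 2 * Δ)) := by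
          rw [hpred, htk1, hσ, hΔ]
          gcongr
          exact norm_inexact_prediction_sub_le hhess ht htt hstrong hC0b hC1b hC2b hC3b hm hC1 hC2
            hzero hh.le (hHerr k)
      _ = _ := by ring
  have hbound := le_pow_mul_add_of_le_mul_add (a := fun k ↦ ‖y k - ystar (tk k)‖) hρσ0 hρσ.ne
    hstep
  refine ⟨hbound, ?_⟩
  exact (limsup_le_of_le_pow_mul_add hρσ0 hρσ (fun _ ↦ norm_nonneg _) hbound).trans_eq (by ring)

/-- Theorem 1, part ii, decentralized form: DPC-G iterates with
ρσ < 1 converge Q-linearly with rate ρσ up to an asymptotic error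
O(hε) + O(h²). -/
theorem stmt_1 {n : ℕ} (hn : 1 ≤ n)
    (F : ℝ → (E n) → ℝ)
    (Fgrad : ℝ → (E n) → (E n))
    (Hess : ℝ → (E n) → (E n) →L[ℝ] (E n))
    (Gt Gtt : ℝ → (E n) → (E n))
    (m L' C0 C1 C2 C3 : ℝ)
    (hm : 0 < m) (hmL : m ≤ L')
    (hC0 : 0 ≤ C0) (hC1 : 0 ≤ C1) (hC2 : 0 ≤ C2) (hC3 : 0 ≤ C3)
    (hF2 : ∀ t, ContDiff ℝ 2 (F t))
    (hG1 : ContDiff ℝ 1 (Function.uncurry Fgrad))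
    (hgrad : ∀ t y, HasGradientAt (F t) (Fgrad t y) y)
    (hhess : ∀ t y, HasFDerivAt (Fgrad t) (Hess t y) y)
    (ht : ∀ t y, HasDerivAt (fun s => Fgrad s y) (Gt t y) t)
    (htt : ∀ t y, HasDerivAt (fun s => Gt s y) (Gtt t y) t)
    (hstrong : ∀ t y (v : E n), m * ‖v‖ ^ 2 ≤ ⟪Hess t y v, v⟫_ℝ)
    (hsmooth : ∀ t y (v : E n), ⟪Hess t y v, v⟫_ℝ ≤ L' * ‖v‖ ^ 2)
    (hC0b : ∀ t y, ‖Gt t y‖ ≤ C0)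
    (hC1b : ∀ t y y', ‖Hess t y - Hess t y'‖ ≤ C1 * ‖y - y'‖)
    (hC2b : ∀ t y y', ‖Gt t y - Gt t y'‖ ≤ C2 * ‖y - y'‖)
    (hC3b : ∀ t y, ‖Gtt t y‖ ≤ C3)
    (ystar : ℝ → E n)
    (hmin : ∀ t, IsMinOn (F t) Set.univ (ystar t))
    (h γ ε Δ σ ρ : ℝ) (hh : 0 < h) (hε : 0 ≤ ε)
    (hγ : 0 < γ) (hγ2 : γ < 2 / L')
    (hΔ : Δ = C0 ^ 2 * C1 / (2 * m ^ 3) + C0 * C2 / m ^ 2 + C3 / (2 * m))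
    (hσ : σ = 1 + h * (C0 * C1 / m ^ 2 + C2 / m))
    (hρ : ρ = max |1 - γ * m| |1 - γ * L'|)
    (hρσ : ρ * σ < 1)
    (tk : ℕ → ℝ) (htk : ∀ k : ℕ, tk k = k * h)
    (y ypred : ℕ → E n)
    (H : ℕ → (E n) →L[ℝ] (E n))
    (hHsa : ∀ k, IsSelfAdjoint (H k))
    (hHpsd : ∀ k (v : E n), 0 ≤ ⟪H k v, v⟫_ℝ)
    (hHerr : ∀ k, ‖ContinuousLinearMap.id ℝ (E n) - (Hess (tk k) (y k)).comp (H k)‖ ≤ ε)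
    (hpred : ∀ k, ypred k = y k - h • H k (Gt (tk k) (y k)))
    (hcorr : ∀ k, y (k + 1) = ypred k - γ • Fgrad (tk (k + 1)) (ypred k)) :
    (∀ k : ℕ, ‖y k - ystar (tk k)‖
        ≤ (ρ * σ) ^ k * ‖y 0 - ystar (tk 0)‖
          + ρ * (h * C0 * ε / m + h ^ 2 * Δ) * (1 - (ρ * σ) ^ k) / (1 - ρ * σ))
    ∧ Filter.limsup (fun k => ‖y k - ystar (tk k)‖) Filter.atTop
        ≤ ρ / (1 - ρ * σ) * (h * C0 * ε / m + h ^ 2 * Δ) :=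
  stmt_1_general F Fgrad Hess Gt Gtt m L' C0 C1 C2 C3 hm hC0 hC1 hC2 hgrad hhess ht htt hstrong
    hsmooth hC0b hC1b hC2b hC3b ystar hmin h γ ε Δ σ ρ hh hΔ hσ hρ hρσ tk htk y ypred H hHerr hpred
    hcorr
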